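/- Let m, e, k, d_0, t, d_ℓ, r_ℓ, r(m) be as in the r-recursion, set s = r(m), and for 0 ≤ ℓ ≤ t set s_ℓ = 1 + r_0 + ⋯ + r_{ℓ-1} (so s_0 = 1). Then in the polynomial ring (ℤ/2)[x_1,…,x_s], the coefficient of the monomial x_1^{m-(2^e-1)}·x_2^m·x_3^m⋯x_s^m in the product ∏_{ℓ=0}^{t} ∏_{i=1}^{r_ℓ} (x_1 + x_{s_ℓ + i})^{m + d_ℓ} equals 1; consequently the image of this product in R(m,s) is nonzero. -/

import Mathlib

open Finset

/-- `eVal m` = `e(m)`, the 2-adic valuation of `m + 1`. -/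
def eVal (m : ℕ) : ℕ := padicValNat 2 (m + 1)

/-- `d0Val m` = `d_0 = 2 ^ k - m - 1`, where `k = Nat.size m` is the least integer
(positive, for `m ≥ 1`) with `2 ^ k > m`. -/
def d0Val (m : ℕ) : ℕ := 2 ^ Nat.size m - m - 1

/-- `dVal m ℓ` = `d_ℓ = d_0 - 2 ^ e · ℓ`. -/
def dVal (m ℓ : ℕ) : ℕ := d0Val m - 2 ^ eVal m * ℓ

/-- `tVal m` = `t = d_0 / 2 ^ e - 1`. -/
def tVal (m : ℕ) : ℕ := d0Val m / 2 ^ eVal m - 1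

/-- One step of the `r`-recursion, given the partial sum
`S = d_0·r_0 + ⋯ + d_{ℓ-1}·r_{ℓ-1}`: the value is
`⌊(m - (2^e - 1) - S) / d_ℓ⌋` if `C(m + d_ℓ, d_ℓ)` is odd, and `0` otherwise. -/
def rStep (m ℓ S : ℕ) : ℕ :=
  if (m + dVal m ℓ).choose (dVal m ℓ) % 2 = 1 then
    (m - (2 ^ eVal m - 1) - S) / dVal m ℓ
  else 0

/-- `partialS m ℓ = d_0·r_0 + ⋯ + d_{ℓ-1}·r_{ℓ-1}`. -/
def partialS (m : ℕ) : ℕ → ℕ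
  | 0 => 0
  | ℓ + 1 => partialS m ℓ + dVal m ℓ * rStep m ℓ (partialS m ℓ)

/-- `rVal m ℓ` is `r_ℓ` in the `r`-recursion. -/
def rVal (m ℓ : ℕ) : ℕ := rStep m ℓ (partialS m ℓ)

/-- `rOf m = r(m) = 1 + r_0 + r_1 + ⋯ + r_t`. -/
def rOf (m : ℕ) : ℕ := 1 + ∑ ℓ ∈ Finset.range (tVal m + 1), rVal m ℓ

/-- The ideal `(x_1^{m+1}, …, x_s^{m+1})` of `(ℤ/2)[x_1, …, x_s]`. -/
noncomputable def projIdeal (m s : ℕ) : Ideal (MvPolynomial (Fin s) (ZMod 2)) :=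
  Ideal.span (Set.range fun i : Fin s =>
    (MvPolynomial.X i : MvPolynomial (Fin s) (ZMod 2)) ^ (m + 1))

/-- `R(m,s) = (ℤ/2)[x_1, …, x_s]/(x_1^{m+1}, …, x_s^{m+1})`,
the mod 2 cohomology ring of `(ℝP^m)^s`. -/
abbrev ProjRing (m s : ℕ) := MvPolynomial (Fin s) (ZMod 2) ⧸ projIdeal m s

/-- `(ℤ/2)[x]/(x^{m+1})`, the mod 2 cohomology ring of `ℝP^m`. -/
abbrev DiagRing (m : ℕ) :=
  Polynomial (ZMod 2) ⧸ Ideal.span {(Polynomial.X : Polynomial (ZMod 2)) ^ (m + 1)}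

/-- `μ(m,s) : R(m,s) → (ℤ/2)[x]/(x^{m+1})`, the `ℤ/2`-algebra map sending each
`x_i` to `x` (induced by the `s`-fold diagonal of `ℝP^m`). -/
noncomputable def muHom (m s : ℕ) : ProjRing m s →ₐ[ZMod 2] DiagRing m :=
  Ideal.Quotient.liftₐ (projIdeal m s)
    ((Ideal.Quotient.mkₐ (ZMod 2)
        (Ideal.span {(Polynomial.X : Polynomial (ZMod 2)) ^ (m + 1)})).comp
      (MvPolynomial.aeval fun _ : Fin s => (Polynomial.X : Polynomial (ZMod 2))))
    (by
      intro a ha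
      have h : projIdeal m s ≤ RingHom.ker
          (((Ideal.Quotient.mkₐ (ZMod 2)
              (Ideal.span {(Polynomial.X : Polynomial (ZMod 2)) ^ (m + 1)})).comp
            (MvPolynomial.aeval fun _ : Fin s => (Polynomial.X : Polynomial (ZMod 2)))) :
          MvPolynomial (Fin s) (ZMod 2) →ₐ[ZMod 2] DiagRing m).toRingHom := by
        rw [projIdeal, Ideal.span_le]
        rintro p ⟨i, rfl⟩
        simp only [SetLike.mem_coe, RingHom.mem_ker, AlgHom.toRingHom_eq_coe, RingHom.coe_coe,
          AlgHom.comp_apply, map_pow, MvPolynomial.aeval_X, Ideal.Quotient.mkₐ_eq_mk]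
        rw [← map_pow, Ideal.Quotient.eq_zero_iff_mem]
        exact Ideal.subset_span rfl
      exact h ha)

/-- `zclVal m s` : the `s`-th zero-divisor cup-length of `ℝP^m` with mod 2 coefficients,
i.e. the largest `N` such that some `N` elements of `ker μ(m,s)` have a nonzero
product in `R(m,s)`. -/
noncomputable def zclVal (m s : ℕ) : ℕ :=
  sSup {N | ∃ f : Fin N → ProjRing m s,
    (∀ i, muHom m s (f i) = 0) ∧ ∏ i, f i ≠ 0}

/-- `sIdx m ℓ = s_ℓ = 1 + r_0 + ⋯ + r_{ℓ-1}` (so `s_0 = 1`). -/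
def sIdx (m ℓ : ℕ) : ℕ := 1 + ∑ j ∈ Finset.range ℓ, rVal m j

lemma sIdx_add_lt (m : ℕ) {ℓ i : ℕ} (hℓ : ℓ ∈ Finset.range (tVal m + 1))
    (hi : i ∈ Finset.range (rVal m ℓ)) : sIdx m ℓ + i < rOf m := by
  rw [Finset.mem_range] at hℓ hi
  have h1 : sIdx m ℓ + i < 1 + ∑ j ∈ Finset.range (ℓ + 1), rVal m j := by
    rw [Finset.sum_range_succ, sIdx]; omega
  have h2 : ∑ j ∈ Finset.range (ℓ + 1), rVal m j ≤
      ∑ j ∈ Finset.range (tVal m + 1), rVal m j :=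
    Finset.sum_le_sum_of_subset (Finset.range_subset_range.mpr hℓ)
  rw [rOf]; omega



section
open MvPolynomial

lemma choose_odd : ∀ e m q : ℕ, m + 1 = 2 ^ e * q → q % 2 = 1 →
    (m + 2 ^ e).choose (2 ^ e) % 2 = 1 := by
  intro e
  induction e with
  | zero =>
    intro m q h hq
    simp only [pow_zero, one_mul] at h ⊢
    rw [Nat.choose_one_right]
    omega
  | succ e ih =>
    intro m q h hq
    haveI : Fact (Nat.Prime 2) := ⟨Nat.prime_two⟩
    have hme : m % 2 = 1 := by
      have h2 : 2 ∣ 2 ^ (e + 1) * q := Dvd.dvd.mul_right (dvd_pow_self 2 (by omega)) q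
      omega
    have key : (m + 2 ^ (e + 1)).choose (2 ^ (e + 1)) ≡
        ((m + 2 ^ (e + 1)) % 2).choose (2 ^ (e + 1) % 2) *
        ((m + 2 ^ (e + 1)) / 2).choose (2 ^ (e + 1) / 2) [MOD 2] :=
      Choose.choose_modEq_choose_mod_mul_choose_div_nat
    have h1 : (m + 2 ^ (e + 1)) % 2 = 1 := by
      have : 2 ^ (e + 1) % 2 = 0 := by
        have : (2:ℕ) ∣ 2 ^ (e + 1) := dvd_pow_self 2 (by omega)
        omega
      omega
    have h2 : 2 ^ (e + 1) % 2 = 0 := by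
      have : (2:ℕ) ∣ 2 ^ (e + 1) := dvd_pow_self 2 (by omega)
      omega
    have h' : m + 1 = 2 * (2 ^ e * q) := by rw [h, pow_succ]; ring
    have h3 : (m + 2 ^ (e + 1)) / 2 = m / 2 + 2 ^ e := by
      have he : 2 ^ (e + 1) = 2 * 2 ^ e := by rw [pow_succ]; ring
      omega
    have h4 : m / 2 + 1 = 2 ^ e * q := by omega
    have h6 : 2 ^ (e + 1) / 2 = 2 ^ e := by
      have he : 2 ^ (e + 1) = 2 * 2 ^ e := by rw [pow_succ]; ring
      omega
    have h5 := ih (m / 2) q h4 hq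
    rw [h1, h2, h3, h6, Nat.choose_zero_right, one_mul] at key
    unfold Nat.ModEq at key
    omega

section NT
variable {m : ℕ}

lemma two_pow_e_dvd (m : ℕ) : 2 ^ eVal m ∣ m + 1 := pow_padicValNat_dvd

lemma two_pow_e_le (m : ℕ) : 2 ^ eVal m ≤ m + 1 :=
  Nat.le_of_dvd (by omega) (two_pow_e_dvd m)

lemma m1_lt (hm : 1 ≤ m) (hpow : ¬ ∃ k, m + 1 = 2 ^ k) : m + 1 < 2 ^ Nat.size m := by
  have h := Nat.lt_size_self m
  rcases Nat.lt_or_ge (m + 1) (2 ^ Nat.size m) with h' | h'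
  · exact h'
  · exact absurd ⟨Nat.size m, by omega⟩ hpow

lemma e_le_size (hm : 1 ≤ m) (hpow : ¬ ∃ k, m + 1 = 2 ^ k) : eVal m ≤ Nat.size m := by
  have h1 := two_pow_e_le m
  have h2 := m1_lt hm hpow
  have : 2 ^ eVal m < 2 ^ Nat.size m := by omega
  exact le_of_lt ((Nat.pow_lt_pow_iff_right (by omega)).mp this)

lemma d0_pos (hm : 1 ≤ m) (hpow : ¬ ∃ k, m + 1 = 2 ^ k) : 0 < d0Val m := by
  have := m1_lt hm hpow
  unfold d0Val
  omega

lemma dvd_d0 (hm : 1 ≤ m) (hpow : ¬ ∃ k, m + 1 = 2 ^ k) : 2 ^ eVal m ∣ d0Val m := by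
  have h : d0Val m = 2 ^ Nat.size m - (m + 1) := by unfold d0Val; omega
  rw [h]
  exact Nat.dvd_sub (pow_dvd_pow 2 (e_le_size hm hpow)) (two_pow_e_dvd m)

lemma d0_eq (hm : 1 ≤ m) (hpow : ¬ ∃ k, m + 1 = 2 ^ k) :
    d0Val m = 2 ^ eVal m * (tVal m + 1) := by
  have hd := dvd_d0 hm hpow
  have hp := d0_pos hm hpow
  have h1 : 1 ≤ d0Val m / 2 ^ eVal m := Nat.one_le_div_iff (by positivity) |>.mpr
    (Nat.le_of_dvd hp hd)
  have : tVal m + 1 = d0Val m / 2 ^ eVal m := by unfold tVal; omega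
  rw [this, Nat.mul_div_cancel' hd]

lemma dvd_M : 2 ^ eVal m ∣ m - (2 ^ eVal m - 1) := by
  have h1 := two_pow_e_le m
  have h0 : 1 ≤ 2 ^ eVal m := Nat.one_le_two_pow
  have h : m - (2 ^ eVal m - 1) = (m + 1) - 2 ^ eVal m := by omega
  rw [h]
  exact Nat.dvd_sub (two_pow_e_dvd m) dvd_rfl

lemma dvd_dVal (hm : 1 ≤ m) (hpow : ¬ ∃ k, m + 1 = 2 ^ k) (ℓ : ℕ) :
    2 ^ eVal m ∣ dVal m ℓ :=
  Nat.dvd_sub (dvd_d0 hm hpow) (dvd_mul_right _ _)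

lemma dVal_t (hm : 1 ≤ m) (hpow : ¬ ∃ k, m + 1 = 2 ^ k) :
    dVal m (tVal m) = 2 ^ eVal m := by
  have h := d0_eq hm hpow
  unfold dVal
  rw [h]
  have h2 : 2 ^ eVal m * (tVal m + 1) = 2 ^ eVal m * tVal m + 2 ^ eVal m := by ring
  rw [h2]
  exact Nat.add_sub_cancel_left _ _

lemma partialS_le (ℓ : ℕ) : partialS m ℓ ≤ m - (2 ^ eVal m - 1) := by
  induction ℓ with
  | zero => simp [partialS]
  | succ ℓ ih =>
    show partialS m ℓ + dVal m ℓ * rStep m ℓ (partialS m ℓ) ≤ _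
    unfold rStep
    split
    · have := Nat.div_mul_le_self (m - (2 ^ eVal m - 1) - partialS m ℓ) (dVal m ℓ)
      have h2 : dVal m ℓ * ((m - (2 ^ eVal m - 1) - partialS m ℓ) / dVal m ℓ) ≤
          m - (2 ^ eVal m - 1) - partialS m ℓ := by
        rw [mul_comm]; exact Nat.div_mul_le_self _ _
      omega
    · omega

lemma dvd_partialS (hm : 1 ≤ m) (hpow : ¬ ∃ k, m + 1 = 2 ^ k) (ℓ : ℕ) :
    2 ^ eVal m ∣ partialS m ℓ := by
  induction ℓ with
  | zero => simp [partialS]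
  | succ ℓ ih =>
    show 2 ^ eVal m ∣ partialS m ℓ + dVal m ℓ * rStep m ℓ (partialS m ℓ)
    exact dvd_add ih ((dvd_dVal hm hpow ℓ).mul_right _)

lemma q_odd (hm : 1 ≤ m) : ((m + 1) / 2 ^ eVal m) % 2 = 1 := by
  by_contra h
  have hdvd := two_pow_e_dvd m
  have h2 : 2 ^ (eVal m + 1) ∣ m + 1 := by
    obtain ⟨q, hq⟩ := hdvd
    have hq2 : q % 2 = 0 := by
      have : (m + 1) / 2 ^ eVal m = q := by
        rw [hq]; exact Nat.mul_div_cancel_left q (by positivity)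
      omega
    obtain ⟨q', hq'⟩ : 2 ∣ q := by omega
    exact ⟨q', by rw [hq, hq', pow_succ]; ring⟩
  have := (Nat.Prime.pow_dvd_iff_le_factorization Nat.prime_two (by omega)).mp h2
  rw [Nat.factorization_def _ Nat.prime_two] at this
  unfold eVal at this
  omega

lemma choose_cond (hm : 1 ≤ m) : (m + 2 ^ eVal m).choose (2 ^ eVal m) % 2 = 1 := by
  apply choose_odd (eVal m) m ((m + 1) / 2 ^ eVal m)
  · exact (Nat.mul_div_cancel' (two_pow_e_dvd m)).symm
  · exact q_odd hm

lemma partialS_final (hm : 1 ≤ m) (hpow : ¬ ∃ k, m + 1 = 2 ^ k) :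
    partialS m (tVal m + 1) = m - (2 ^ eVal m - 1) := by
  have hdt := dVal_t hm hpow
  have hle := partialS_le (m := m) (tVal m)
  have hdM : 2 ^ eVal m ∣ m - (2 ^ eVal m - 1) - partialS m (tVal m) :=
    Nat.dvd_sub dvd_M (dvd_partialS hm hpow _)
  show partialS m (tVal m) + dVal m (tVal m) * rStep m (tVal m) (partialS m (tVal m)) = _
  rw [rStep, hdt]
  rw [if_pos (choose_cond hm), Nat.mul_div_cancel' hdM]
  omega

lemma sum_dVal_rVal (L : ℕ) :
    ∑ ℓ ∈ Finset.range L, dVal m ℓ * rVal m ℓ = partialS m L := by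
  induction L with
  | zero => simp [partialS]
  | succ L ih => rw [Finset.sum_range_succ, ih]; rfl

lemma sIdx_succ (ℓ : ℕ) : sIdx m (ℓ + 1) = sIdx m ℓ + rVal m ℓ := by
  unfold sIdx
  rw [Finset.sum_range_succ]
  omega

lemma sIdx_mono {a b : ℕ} (h : a ≤ b) : sIdx m a ≤ sIdx m b := by
  unfold sIdx
  have := Finset.sum_le_sum_of_subset (f := rVal m) (Finset.range_subset_range.mpr h)
  omega

lemma sIdx_top : sIdx m (tVal m + 1) = rOf m := rfl

lemma exists_cover : ∀ L x, 1 ≤ x → x < sIdx m L →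
    ∃ ℓ < L, ∃ i < rVal m ℓ, x = sIdx m ℓ + i := by
  intro L
  induction L with
  | zero => intro x h1 h2; simp [sIdx] at h2; omega
  | succ L ih =>
    intro x h1 h2
    rw [sIdx_succ] at h2
    rcases Nat.lt_or_ge x (sIdx m L) with h | h
    · obtain ⟨ℓ, hℓ, i, hi, hx⟩ := ih x h1 h
      exact ⟨ℓ, by omega, i, hi, hx⟩
    · exact ⟨L, by omega, x - sIdx m L, by omega, by omega⟩
end NT

lemma vars_prod_sub {s : ℕ} (z : Fin s) {ι : Type} [DecidableEq ι]
    (S : Finset ι) (v : ι → Fin s) (n : ι → ℕ) {j : Fin s}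
    (hj : j ∈ (∏ b ∈ S, (X z + X (v b) : MvPolynomial (Fin s) (ZMod 2)) ^ n b).vars) :
    j = z ∨ ∃ b ∈ S, v b = j := by
  induction S using Finset.cons_induction with
  | empty => simp [vars_one] at hj
  | cons a S ha ih =>
    rw [Finset.prod_cons] at hj
    have h1 := MvPolynomial.vars_mul ((X z + X (v a)) ^ n a)
      (∏ b ∈ S, (X z + X (v b) : MvPolynomial (Fin s) (ZMod 2)) ^ n b) hj
    rw [Finset.mem_union] at h1
    rcases h1 with h | h
    · have h2 := MvPolynomial.vars_pow (X z + X (v a) : MvPolynomial (Fin s) (ZMod 2)) (n a) h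
      have h3 := MvPolynomial.vars_add_subset (X z : MvPolynomial (Fin s) (ZMod 2)) (X (v a)) h2
      rw [Finset.mem_union, MvPolynomial.vars_X, MvPolynomial.vars_X] at h3
      simp only [Finset.mem_singleton] at h3
      rcases h3 with h | h
      · exact Or.inl h
      · exact Or.inr ⟨a, Finset.mem_cons_self a S, h.symm⟩
    · rcases ih h with h | ⟨b, hb, hvb⟩
      · exact Or.inl h
      · exact Or.inr ⟨b, Finset.mem_cons_of_mem hb, hvb⟩

lemma key_coeff {s : ℕ} (z : Fin s) (m : ℕ) {ι : Type} [DecidableEq ι]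
    (T : Finset ι) (v : ι → Fin s) (n : ι → ℕ)
    (hinj : ∀ a ∈ T, ∀ b ∈ T, v a = v b → a = b)
    (hz : ∀ a ∈ T, v a ≠ z) (hn : ∀ a ∈ T, m ≤ n a) :
    MvPolynomial.coeff
      (Finsupp.single z (∑ a ∈ T, (n a - m)) + ∑ a ∈ T, Finsupp.single (v a) m)
      (∏ a ∈ T, (MvPolynomial.X z + MvPolynomial.X (v a) : MvPolynomial (Fin s) (ZMod 2)) ^ n a)
    = ∏ a ∈ T, ((n a).choose m : ZMod 2) := by
  induction T using Finset.cons_induction with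
  | empty => simp
  | cons a S ha ih =>
    have hma : m ≤ n a := hn a (Finset.mem_cons_self a S)
    set N := n a with hN
    set q := ∏ b ∈ S, (X z + X (v b) : MvPolynomial (Fin s) (ZMod 2)) ^ n b with hq
    set c := ∑ b ∈ S, (n b - m) with hc
    set μS := Finsupp.single z c + ∑ b ∈ S, Finsupp.single (v b) m with hμS
    -- support of q avoids v a
    have hvq : ∀ ν ∈ q.support, ν (v a) = 0 := by
      intro ν hν
      by_contra hne
      have hmem : v a ∈ q.vars := by
        rw [MvPolynomial.mem_vars]
        exact ⟨ν, hν, Finsupp.mem_support_iff.mpr hne⟩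
      rcases vars_prod_sub z S v n hmem with h | ⟨b, hb, hvb⟩
      · exact hz a (Finset.mem_cons_self a S) h
      · exact ha (hinj b (Finset.mem_cons_of_mem hb) a (Finset.mem_cons_self a S) hvb ▸ hb)
    rw [Finset.prod_cons, Finset.sum_cons, Finset.sum_cons, Finset.prod_cons]
    set μ := Finsupp.single z (N - m + c) +
        (Finsupp.single (v a) m + ∑ b ∈ S, Finsupp.single (v b) m) with hμ
    have hμa : μ (v a) = m := by
      have h1 : Finsupp.single z (N - m + c) (v a) = 0 :=
        Finsupp.single_eq_of_ne' (fun h => hz a (Finset.mem_cons_self a S) h.symm)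
      have h2 : (∑ b ∈ S, Finsupp.single (v b) m) (v a) = 0 := by
        rw [Finsupp.finset_sum_apply]
        apply Finset.sum_eq_zero
        intro b hb
        exact Finsupp.single_eq_of_ne' (fun h =>
          ha (hinj b (Finset.mem_cons_of_mem hb) a (Finset.mem_cons_self a S) h ▸ hb))
      rw [hμ, Finsupp.add_apply, Finsupp.add_apply, h1, h2, Finsupp.single_eq_same]
      omega
    have hμeq : μ = (Finsupp.single z (N - m) + Finsupp.single (v a) m) + μS := by
      rw [hμ, hμS, Finsupp.single_add]
      abel
    have hp : (X z + X (v a) : MvPolynomial (Fin s) (ZMod 2)) ^ N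
        = ∑ k ∈ Finset.range (N + 1),
            MvPolynomial.monomial (Finsupp.single z k + Finsupp.single (v a) (N - k))
              ((N.choose k : ZMod 2)) := by
      rw [add_pow]
      refine Finset.sum_congr rfl fun k hk => ?_
      rw [X_pow_eq_monomial, X_pow_eq_monomial, monomial_mul, mul_one]
      rw [show ((N.choose k : ℕ) : MvPolynomial (Fin s) (ZMod 2)) = C (N.choose k : ZMod 2) by
        simp]
      rw [mul_comm, C_mul_monomial]
      simp
    rw [hp, Finset.sum_mul, ← hq]
    rw [show MvPolynomial.coeff μ
        (∑ k ∈ Finset.range (N + 1),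
          (MvPolynomial.monomial (Finsupp.single z k + Finsupp.single (v a) (N - k))
            ((N.choose k : ZMod 2))) * q)
      = ∑ k ∈ Finset.range (N + 1), MvPolynomial.coeff μ
          ((MvPolynomial.monomial (Finsupp.single z k + Finsupp.single (v a) (N - k))
            ((N.choose k : ZMod 2))) * q) from by
        rw [← MvPolynomial.coeff_sum]  ]
    rw [Finset.sum_eq_single_of_mem (N - m) (Finset.mem_range.mpr (by omega))]
    · rw [MvPolynomial.coeff_monomial_mul']
      have hNm : N - (N - m) = m := by omega
      rw [hNm]
      rw [if_pos (by rw [hμeq]; exact le_self_add)]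
      have : μ - (Finsupp.single z (N - m) + Finsupp.single (v a) m) = μS := by
        rw [hμeq]; exact add_tsub_cancel_left _ _
      rw [this, hμS, ih (fun x hx y hy => hinj x (Finset.mem_cons_of_mem hx) y
            (Finset.mem_cons_of_mem hy))
          (fun x hx => hz x (Finset.mem_cons_of_mem hx))
          (fun x hx => hn x (Finset.mem_cons_of_mem hx))]
      rw [Nat.choose_symm hma]
    · intro k hk hkne
      rw [MvPolynomial.coeff_monomial_mul']
      split_ifs with hle
      · -- show coeff (μ - d) q = 0
        have hdva : (Finsupp.single z k + Finsupp.single (v a) (N - k)) (v a) = N - k := by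
          rw [Finsupp.add_apply,
            Finsupp.single_eq_of_ne' (fun h => hz a (Finset.mem_cons_self a S) h.symm),
            Finsupp.single_eq_same]
          omega
        have hlek : N - k ≤ m := by
          have := hle (v a)
          rw [hdva, hμa] at this
          exact this
        have hklt : N - k < m := by
          rcases Nat.lt_or_ge (N - k) m with h | h
          · exact h
          · exfalso
            rw [Finset.mem_range] at hk
            exact hkne (by omega)
        have hsub : (μ - (Finsupp.single z k + Finsupp.single (v a) (N - k))) (v a) =
            m - (N - k) := by
          rw [Finsupp.tsub_apply, hdva, hμa]

        have : MvPolynomial.coeff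
            (μ - (Finsupp.single z k + Finsupp.single (v a) (N - k))) q = 0 := by
          by_contra hne
          have := hvq _ (MvPolynomial.mem_support_iff.mpr hne)
          omega
        rw [this, mul_zero]
      · rfl

lemma coeff_eq_zero_of_mem_projIdeal {m s : ℕ} {p : MvPolynomial (Fin s) (ZMod 2)}
    (hp : p ∈ projIdeal m s) (ν : Fin s →₀ ℕ) (hν : ∀ i, ν i ≤ m) :
    MvPolynomial.coeff ν p = 0 := by
  revert ν
  refine Submodule.span_induction
    (p := fun x _ => ∀ ν : Fin s →₀ ℕ, (∀ i, ν i ≤ m) → MvPolynomial.coeff ν x = 0)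
    ?_ ?_ ?_ ?_ hp
  · rintro x ⟨i, rfl⟩ ν hν
    rw [MvPolynomial.coeff_X_pow, if_neg]
    intro h
    have h2 := congrArg (fun f : Fin s →₀ ℕ => f i) h
    simp only [Finsupp.single_eq_same] at h2
    have := hν i
    omega
  · intro ν hν; simp
  · intro x y hx hy ihx ihy ν hν
    rw [MvPolynomial.coeff_add, ihx ν hν, ihy ν hν, add_zero]
  · intro r x hx ihx ν hν
    rw [smul_eq_mul, MvPolynomial.coeff_mul]
    apply Finset.sum_eq_zero
    intro pr hpr
    rw [Finset.HasAntidiagonal.mem_antidiagonal] at hpr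
    have hle : ∀ i, pr.2 i ≤ m := by
      intro i
      have h2 := congrArg (fun f : Fin s →₀ ℕ => f i) hpr
      simp only [Finsupp.add_apply] at h2
      have := hν i
      omega
    rw [ihx pr.2 hle, mul_zero]


section MainAux

def Tset (m : ℕ) : Finset ((_ : ℕ) × ℕ) :=
  (Finset.range (tVal m + 1)).sigma fun ℓ => Finset.range (rVal m ℓ)

lemma rOf_pos (m : ℕ) : 0 < rOf m := by rw [rOf]; omega

def vMap (m : ℕ) (p : (_ : ℕ) × ℕ) : Fin (rOf m) :=
  ⟨(sIdx m p.1 + p.2) % rOf m, Nat.mod_lt _ (rOf_pos m)⟩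

lemma sIdx_pos (m ℓ : ℕ) : 1 ≤ sIdx m ℓ := by unfold sIdx; omega

lemma vMap_val {m : ℕ} {p : (_ : ℕ) × ℕ} (hp : p ∈ Tset m) :
    (vMap m p : ℕ) = sIdx m p.1 + p.2 := by
  rw [Tset, Finset.mem_sigma] at hp
  exact Nat.mod_eq_of_lt (sIdx_add_lt m hp.1 hp.2)

lemma vMap_inj {m : ℕ} {p p' : (_ : ℕ) × ℕ} (hp : p ∈ Tset m) (hp' : p' ∈ Tset m)
    (h : vMap m p = vMap m p') : p = p' := by
  have hval : sIdx m p.1 + p.2 = sIdx m p'.1 + p'.2 := by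
    rw [← vMap_val hp, ← vMap_val hp', h]
  rw [Tset, Finset.mem_sigma, Finset.mem_range, Finset.mem_range] at hp hp'
  obtain ⟨a, b⟩ := p
  obtain ⟨a', b'⟩ := p'
  simp only at hval hp hp' ⊢
  rcases lt_trichotomy a a' with hlt | heq | hgt
  · exfalso
    have h1 := sIdx_succ (m := m) a
    have h2 := sIdx_mono (m := m) (show a + 1 ≤ a' by omega)
    omega
  · subst heq
    have : b = b' := by omega
    subst this
    rfl
  · exfalso
    have h1 := sIdx_succ (m := m) a'
    have h2 := sIdx_mono (m := m) (show a' + 1 ≤ a by omega)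
    omega

end MainAux

end

/-- With `s = r(m)` and `s_ℓ = 1 + r_0 + ⋯ + r_{ℓ-1}`, the
coefficient of the monomial `x_1^{m-(2^e-1)}·x_2^m⋯x_s^m` in
`∏_{ℓ=0}^{t} ∏_{i=1}^{r_ℓ} (x_1 + x_{s_ℓ+i})^{m+d_ℓ} ∈ (ℤ/2)[x_1,…,x_s]`
equals `1`; consequently the image of this product in `R(m,s)` is nonzero.
(Here the variable `x_j` is `MvPolynomial.X ⟨j - 1, _⟩`.) -/
theorem coeff_eq_one_and_image_ne_zero (m : ℕ) (hm : 1 ≤ m)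
    (hpow : ¬ ∃ k, m + 1 = 2 ^ k) :
    (MvPolynomial.coeff
      (Finsupp.equivFunOnFinite.symm fun j : Fin (rOf m) =>
        if (j : ℕ) = 0 then m - (2 ^ eVal m - 1) else m)
      (∏ ℓ ∈ (Finset.range (tVal m + 1)).attach,
        ∏ i ∈ (Finset.range (rVal m ℓ.1)).attach,
          ((MvPolynomial.X (⟨0, by rw [rOf]; omega⟩ : Fin (rOf m)) +
            MvPolynomial.X ⟨sIdx m ℓ.1 + i.1, sIdx_add_lt m ℓ.2 i.2⟩ :
            MvPolynomial (Fin (rOf m)) (ZMod 2))) ^ (m + dVal m ℓ.1)) = 1) ∧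
    Ideal.Quotient.mk (projIdeal m (rOf m))
      (∏ ℓ ∈ (Finset.range (tVal m + 1)).attach,
        ∏ i ∈ (Finset.range (rVal m ℓ.1)).attach,
          ((MvPolynomial.X (⟨0, by rw [rOf]; omega⟩ : Fin (rOf m)) +
            MvPolynomial.X ⟨sIdx m ℓ.1 + i.1, sIdx_add_lt m ℓ.2 i.2⟩ :
            MvPolynomial (Fin (rOf m)) (ZMod 2))) ^ (m + dVal m ℓ.1)) ≠ 0 := by
  have hs : 0 < rOf m := rOf_pos m
  have z_pf : 0 < rOf m := by rw [rOf]; omega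
  set z : Fin (rOf m) := ⟨0, z_pf⟩ with hzdef
  have hzval : (z : ℕ) = 0 := rfl
  -- hypotheses for key_coeff
  have hinj : ∀ p ∈ Tset m, ∀ p' ∈ Tset m, vMap m p = vMap m p' → p = p' :=
    fun p hp p' hp' h => vMap_inj hp hp' h
  have hzp : ∀ p ∈ Tset m, vMap m p ≠ z := by
    intro p hp h
    have h1 := congrArg Fin.val h
    rw [vMap_val hp, hzval] at h1
    have := sIdx_pos m p.1
    omega
  have hnp : ∀ p ∈ Tset m, m ≤ m + dVal m p.1 := fun p _ => Nat.le_add_right _ _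
  have hprod :
      (∏ ℓ ∈ (Finset.range (tVal m + 1)).attach,
        ∏ i ∈ (Finset.range (rVal m ℓ.1)).attach,
          ((MvPolynomial.X (⟨0, by rw [rOf]; omega⟩ : Fin (rOf m)) +
            MvPolynomial.X ⟨sIdx m ℓ.1 + i.1, sIdx_add_lt m ℓ.2 i.2⟩ :
            MvPolynomial (Fin (rOf m)) (ZMod 2))) ^ (m + dVal m ℓ.1))
      = ∏ p ∈ Tset m,
          (MvPolynomial.X z + MvPolynomial.X (vMap m p) :
            MvPolynomial (Fin (rOf m)) (ZMod 2)) ^ (m + dVal m p.1) := by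
    rw [Tset, Finset.prod_sigma]
    rw [← Finset.prod_attach (Finset.range (tVal m + 1)) (fun ℓ =>
      ∏ i ∈ Finset.range (rVal m ℓ),
        (MvPolynomial.X z + MvPolynomial.X (vMap m ⟨ℓ, i⟩) :
          MvPolynomial (Fin (rOf m)) (ZMod 2)) ^ (m + dVal m ℓ))]
    refine Finset.prod_congr rfl fun ℓ _ => ?_
    rw [← Finset.prod_attach (Finset.range (rVal m ℓ.1)) (fun i =>
      (MvPolynomial.X z + MvPolynomial.X (vMap m ⟨ℓ.1, i⟩) :
        MvPolynomial (Fin (rOf m)) (ZMod 2)) ^ (m + dVal m ℓ.1))]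
    refine Finset.prod_congr rfl fun i _ => ?_
    have hmem : (⟨ℓ.1, i.1⟩ : (_ : ℕ) × ℕ) ∈ Tset m := by
      rw [Tset, Finset.mem_sigma]; exact ⟨ℓ.2, i.2⟩
    have hX : (⟨sIdx m ℓ.1 + i.1, sIdx_add_lt m ℓ.2 i.2⟩ : Fin (rOf m)) =
        vMap m ⟨ℓ.1, i.1⟩ := Fin.ext (vMap_val hmem).symm
    rw [hX]
  have hsum : ∑ p ∈ Tset m, ((m + dVal m p.1) - m) = m - (2 ^ eVal m - 1) := by
    rw [Tset, Finset.sum_sigma]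
    rw [Finset.sum_congr rfl (fun ℓ _ => show
        (∑ i ∈ Finset.range (rVal m ℓ), ((m + dVal m ℓ) - m)) = dVal m ℓ * rVal m ℓ by
      rw [Finset.sum_const, Finset.card_range, smul_eq_mul]
      have : m + dVal m ℓ - m = dVal m ℓ := by omega
      rw [this, mul_comm])]
    rw [sum_dVal_rVal, partialS_final hm hpow]
  have hμ : (Finsupp.equivFunOnFinite.symm fun j : Fin (rOf m) =>
        if (j : ℕ) = 0 then m - (2 ^ eVal m - 1) else m)
      = Finsupp.single z (∑ p ∈ Tset m, ((m + dVal m p.1) - m)) +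
        ∑ p ∈ Tset m, Finsupp.single (vMap m p) m := by
    ext j
    rw [Finsupp.equivFunOnFinite_symm_apply_apply, Finsupp.add_apply,
      Finsupp.finset_sum_apply]
    by_cases hj : (j : ℕ) = 0
    · rw [if_pos hj]
      have hjz : j = z := Fin.ext hj
      rw [hjz, Finsupp.single_eq_same, hsum]
      rw [Finset.sum_eq_zero (fun p hp => Finsupp.single_eq_of_ne' (hzp p hp)), add_zero]
    · rw [if_neg hj]
      have hzj : z ≠ j := fun h => hj (by rw [← h])
      rw [Finsupp.single_eq_of_ne' hzj]
      have hj1 : 1 ≤ (j : ℕ) := by omega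
      have hj2 : (j : ℕ) < sIdx m (tVal m + 1) := by rw [sIdx_top]; exact j.2
      obtain ⟨ℓ, hℓ, i, hi, hx⟩ := exists_cover (tVal m + 1) (j : ℕ) hj1 hj2
      have hpmem : (⟨ℓ, i⟩ : (_ : ℕ) × ℕ) ∈ Tset m := by
        rw [Tset, Finset.mem_sigma]
        exact ⟨Finset.mem_range.mpr hℓ, Finset.mem_range.mpr hi⟩
      have hvj : vMap m ⟨ℓ, i⟩ = j := Fin.ext (by rw [vMap_val hpmem]; exact hx.symm)
      have hother : ∀ p ∈ Tset m, p ≠ (⟨ℓ, i⟩ : (_ : ℕ) × ℕ) →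
          (Finsupp.single (vMap m p) m) j = 0 := by
        intro p hp hne
        apply Finsupp.single_eq_of_ne'
        intro h
        exact hne (vMap_inj hp hpmem (by rw [h, hvj]))
      rw [Finset.sum_eq_single_of_mem (⟨ℓ, i⟩ : (_ : ℕ) × ℕ) hpmem hother, hvj,
        Finsupp.single_eq_same, zero_add]
  have h1 : (MvPolynomial.coeff
      (Finsupp.equivFunOnFinite.symm fun j : Fin (rOf m) =>
        if (j : ℕ) = 0 then m - (2 ^ eVal m - 1) else m)
      (∏ ℓ ∈ (Finset.range (tVal m + 1)).attach,
        ∏ i ∈ (Finset.range (rVal m ℓ.1)).attach,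
          ((MvPolynomial.X (⟨0, by rw [rOf]; omega⟩ : Fin (rOf m)) +
            MvPolynomial.X ⟨sIdx m ℓ.1 + i.1, sIdx_add_lt m ℓ.2 i.2⟩ :
            MvPolynomial (Fin (rOf m)) (ZMod 2))) ^ (m + dVal m ℓ.1)) = 1) := by
    rw [hprod, hμ]
    rw [key_coeff z m (Tset m) (vMap m) (fun p => m + dVal m p.1) hinj hzp hnp]
    apply Finset.prod_eq_one
    intro p hp
    have hp' : p.1 ∈ Finset.range (tVal m + 1) ∧ p.2 ∈ Finset.range (rVal m p.1) := by
      rw [Tset, Finset.mem_sigma] at hp; exact hp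
    have hr : 0 < rVal m p.1 :=
      lt_of_le_of_lt (Nat.zero_le _) (Finset.mem_range.mp hp'.2)
    have hcond : (m + dVal m p.1).choose (dVal m p.1) % 2 = 1 := by
      by_contra hcond
      have : rVal m p.1 = 0 := by rw [rVal, rStep, if_neg hcond]
      omega
    show ((m + dVal m p.1).choose m : ZMod 2) = 1
    rw [Nat.choose_symm_add,
      ← ZMod.natCast_mod ((m + dVal m p.1).choose (dVal m p.1)) 2, hcond]
    exact Nat.cast_one
  refine ⟨h1, ?_⟩
  intro h0
  have hmem := (Ideal.Quotient.eq_zero_iff_mem).mp h0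
  have h2 := coeff_eq_zero_of_mem_projIdeal hmem
    (Finsupp.equivFunOnFinite.symm fun j : Fin (rOf m) =>
        if (j : ℕ) = 0 then m - (2 ^ eVal m - 1) else m)
    (by
      intro i
      rw [Finsupp.equivFunOnFinite_symm_apply_apply]
      split_ifs <;> omega)
  rw [h1] at h2
  exact one_ne_zero h2
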